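/- For every m ≥ 1, r > 0, and all n, k, l₁, l₂ ∈ ℕ with l₁ ≤ n and l₁ + l₂ > 0, there exists a constant C = C(n,k,l₁,l₂,r) > 0 such that for every smooth function f on B̄_r ⊂ ℝ^m that is flat at the origin, ⟨f⟩_{n,k,r} ≤ C · ⟨f⟩_{n−l₁,k,r}^{l₂/(l₁+l₂)} · ⟨f⟩_{n+l₂,k,r}^{l₁/(l₁+l₂)} (interpolation inequality in the derivative index). -/

import Mathlib

open Metric Set

/-- The weighted norm `⟨f⟩_{n,k,r}` on flat functions on the closed ball. -/
noncomputable def flatNorm (m : ℕ) (r : ℝ) (n k : ℕ)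
    (f : EuclideanSpace ℝ (Fin m) → ℝ) : ℝ :=
  ⨆ p : (closedBall (0 : EuclideanSpace ℝ (Fin m)) r \ {0} :
      Set (EuclideanSpace ℝ (Fin m))) × Fin (n + 1),
    ‖(p.1 : EuclideanSpace ℝ (Fin m))‖ ^ (-(k : ℤ)) *
      ‖iteratedFDerivWithin ℝ p.2 f (closedBall 0 r) p.1‖

/-!
Write `F_N = ⟨f⟩_{N,k,r}`. The heart of the proof is the pointwise inequality
`‖D^{j+1} f(x)‖ ≤ 9 |x|^k √(F_j F_{j+2})`. If `0 < h ≤ |x|`, every unit vector is a combination,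
with coefficients of size `O(1/h)`, of two increments `d` with `|d| ≤ h` and `|x + d| ≤ |x|`. Along
such an increment the segment stays in the ball of radius `|x|`, where the weights are at most
`|x|^k`, so Taylor's formula bounds the derivative in direction `d` by
`|x|^k (2 F_j + h² F_{j+2})`. Optimising in `h`, and using the mean value theorem from the flat
origin when `|x|` is too small for the optimal `h`, gives the inequality. Hence
`F_{j+1} ≤ 9 √(F_j F_{j+2})`: the sequence `log F_j + j² log 9` is convex, and comparing its
values at `n - l₁`, `n`, `n + l₂` gives the theorem with `C = 9^{l₁ l₂}`.
-/

theorem le_nine_mul_sqrt_of_forall_le {N A B X : ℝ} (hN : 0 ≤ N) (hB : 0 ≤ B)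
    (hX : N ≤ B * X) (h : ∀ h, 0 < h → h ≤ X → N ≤ 3 * (2 * A + B * h ^ 2) / h) :
    N ≤ 9 * √(A * B) := by
  rcases hN.eq_or_lt with rfl | hN
  · positivity
  have hBX : 0 < B * X := hN.trans_le hX
  have hB : 0 < B := hB.lt_of_ne (by rintro rfl; simp at hBX)
  have hX : 0 < X := pos_of_mul_pos_right hBX hB.le
  -- `h = N / (6B)` is admissible since `N ≤ BX`, and it gives `N² ≤ 72AB`.
  have key := h (N / (6 * B)) (by positivity) (by rw [div_le_iff₀ (by positivity)]; nlinarith)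
  rw [show 3 * (2 * A + B * (N / (6 * B)) ^ 2) / (N / (6 * B)) = 36 * (A * B) / N + N / 2 by
    field_simp; ring] at key
  have hsq : N * N ≤ 72 * (A * B) := by
    have := (le_div_iff₀ hN).1 (by linarith : N / 2 ≤ 36 * (A * B) / N)
    nlinarith
  rw [show 9 * √(A * B) = √(9 ^ 2 * (A * B)) by
    rw [Real.sqrt_mul (by positivity : (0 : ℝ) ≤ 9 ^ 2), Real.sqrt_sq (by norm_num)]]
  exact Real.le_sqrt_of_sq_le (by nlinarith)

theorem zpow_neg_natCast_mul_le_iff {t X A : ℝ} (ht : 0 < t) (k : ℕ) :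
    t ^ (-(k : ℤ)) * X ≤ A ↔ X ≤ t ^ k * A := by
  rw [zpow_neg, zpow_natCast, inv_mul_le_iff₀ (pow_pos ht k)]

theorem add_mul_le_mul_add_mul_of_two_mul_le_add (d : ℕ → ℝ) {l₁ l₂ : ℕ}
    (h : ∀ j, j + 2 ≤ l₁ + l₂ → 2 * d (j + 1) ≤ d j + d (j + 2)) :
    ((l₁ : ℝ) + l₂) * d l₁ ≤ l₂ * d 0 + l₁ * d (l₁ + l₂) := by
  rcases Nat.eq_zero_or_pos l₂ with rfl | hl₂
  · simp
  set e : ℕ → ℝ := fun i => d (i + 1) - d i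
  have he : MonotoneOn e (Iio (l₁ + l₂)) := monotoneOn_of_le_add_one ordConnected_Iio
    fun i _ _ hi => by simp only [e]; linarith [h i (by simp at hi; omega)]
  have hleft : d l₁ - d 0 ≤ l₁ * e l₁ := by
    have := Finset.sum_le_card_nsmul (Finset.range l₁) e (e l₁) fun i hi =>
      he (by simp at hi ⊢; omega) (by simp; omega) (Finset.mem_range.1 hi).le
    rwa [Finset.sum_range_sub d, Finset.card_range, nsmul_eq_mul] at this
  have hright : l₂ * e l₁ ≤ d (l₁ + l₂) - d l₁ := by
    have := Finset.card_nsmul_le_sum (Finset.range l₂) (fun i => e (l₁ + i)) (e l₁) fun i hi =>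
      he (by simp; omega) (by simp at hi ⊢; omega) (by omega)
    have tele : ∑ i ∈ Finset.range l₂, e (l₁ + i) = d (l₁ + l₂) - d (l₁ + 0) :=
      Finset.sum_range_sub (fun i => d (l₁ + i)) l₂
    rwa [tele, Finset.card_range, nsmul_eq_mul, add_zero] at this
  nlinarith [mul_le_mul_of_nonneg_left hleft (Nat.cast_nonneg l₂ : (0 : ℝ) ≤ l₂),
    mul_le_mul_of_nonneg_left hright (Nat.cast_nonneg l₁ : (0 : ℝ) ≤ l₁)]

theorem pos_of_le_mul_sqrt_of_pos {a : ℕ → ℝ} {c : ℝ} {l L : ℕ} (hc : 0 ≤ c) (ha : ∀ j, 0 ≤ a j)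
    (h : ∀ j, j + 2 ≤ L → a (j + 1) ≤ c * √(a j * a (j + 2))) (hl₀ : 0 < l) (hlL : l < L)
    (hpos : 0 < a l) {j : ℕ} (hj : j ≤ L) : 0 < a j := by
  have hneigh : ∀ i, 0 < i → i < L → 0 < a i → 0 < a (i - 1) ∧ 0 < a (i + 1) := by
    intro i hi₀ hiL hi
    have hstep := h (i - 1) (by omega)
    rw [show i - 1 + 1 = i by omega, show i - 1 + 2 = i + 1 by omega] at hstep
    have hprod : 0 < a (i - 1) * a (i + 1) :=
      Real.sqrt_pos.1 (pos_of_mul_pos_right (hi.trans_le hstep) hc)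
    exact ⟨pos_of_mul_pos_left hprod (ha _), pos_of_mul_pos_right hprod (ha _)⟩
  have hup : ∀ j, l ≤ j → j ≤ L → 0 < a j := by
    intro j hj
    induction j, hj using Nat.le_induction with
    | base => exact fun _ => hpos
    | succ j hj ih => exact fun hjL => (hneigh j (by omega) (by omega) (ih (by omega))).2
  have hdown : ∀ i ≤ l, 0 < a (l - i) := by
    intro i hi
    induction i with
    | zero => exact hpos
    | succ i ih =>
      have := (hneigh (l - i) (by omega) (by omega) (ih (by omega))).1
      rwa [show l - i - 1 = l - (i + 1) by omega] at this
  rcases le_total l j with h₁ | h₁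
  · exact hup j h₁ hj
  · simpa [Nat.sub_sub_self h₁] using hdown (l - j) (by omega)

theorem le_pow_mul_rpow_mul_rpow_of_le_mul_sqrt {a : ℕ → ℝ} {c : ℝ} {l₁ l₂ : ℕ} (hc : 0 < c)
    (ha : ∀ j, 0 ≤ a j) (h : ∀ j, j + 2 ≤ l₁ + l₂ → a (j + 1) ≤ c * √(a j * a (j + 2)))
    (hl : 0 < l₁ + l₂) :
    a l₁ ≤ c ^ (l₁ * l₂) * a 0 ^ ((l₂ : ℝ) / ((l₁ : ℝ) + (l₂ : ℝ))) *
      a (l₁ + l₂) ^ ((l₁ : ℝ) / ((l₁ : ℝ) + (l₂ : ℝ))) := by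
  rcases Nat.eq_zero_or_pos l₁ with rfl | hl₁
  · simp [show l₂ ≠ 0 by omega]
  rcases Nat.eq_zero_or_pos l₂ with rfl | hl₂
  · simp [show l₁ ≠ 0 by omega]
  rcases (ha l₁).eq_or_lt with h0 | hpos
  · rw [← h0]
    exact mul_nonneg (mul_nonneg (by positivity) (Real.rpow_nonneg (ha 0) _))
      (Real.rpow_nonneg (ha _) _)
  have hpos_all : ∀ j ≤ l₁ + l₂, 0 < a j := fun j hj =>
    pos_of_le_mul_sqrt_of_pos hc.le ha h hl₁ (by omega) hpos hj
  set L := Real.log c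
  have hconv := add_mul_le_mul_add_mul_of_two_mul_le_add
    (fun j => Real.log (a j) + L * j ^ 2) (l₁ := l₁) (l₂ := l₂) fun j hj => by
      have hlog := Real.log_le_log (hpos_all (j + 1) (by omega)) (h j hj)
      have hj₀ := hpos_all j (by omega)
      have hj₂ := hpos_all (j + 2) hj
      rw [Real.log_mul hc.ne' (by positivity), Real.log_sqrt (by positivity),
        Real.log_mul hj₀.ne' hj₂.ne'] at hlog
      push_cast
      linear_combination 2 * hlog
  simp only [CharP.cast_eq_zero, Nat.cast_add] at hconv
  rw [← Real.exp_log hpos, ← Real.exp_log (pow_pos hc _),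
    Real.rpow_def_of_pos (hpos_all 0 (by omega)), Real.rpow_def_of_pos (hpos_all _ le_rfl),
    ← Real.exp_add, ← Real.exp_add, Real.exp_le_exp, Real.log_pow]
  calc Real.log (a l₁) = (((l₁ : ℝ) + l₂) * Real.log (a l₁)) / (l₁ + l₂) := by field_simp
    _ ≤ (((l₁ : ℝ) + l₂) * (l₁ * l₂ * L) + l₂ * Real.log (a 0) + l₁ * Real.log (a (l₁ + l₂)))
          / (l₁ + l₂) := by gcongr; linear_combination hconv
    _ = _ := by push_cast; field_simp; ring

section NormedSpace

variable {E G : Type*} [NormedAddCommGroup E] [NormedSpace ℝ E]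
  [NormedAddCommGroup G] [NormedSpace ℝ G]

theorem norm_sub_sub_le_of_norm_deriv2_le {φ ψ χ : ℝ → G} {C : ℝ}
    (hφ : ∀ t ∈ Icc (0 : ℝ) 1, HasDerivWithinAt φ (ψ t) (Icc 0 1) t)
    (hψ : ∀ t ∈ Icc (0 : ℝ) 1, HasDerivWithinAt ψ (χ t) (Icc 0 1) t)
    (hχ : ∀ t ∈ Icc (0 : ℝ) 1, ‖χ t‖ ≤ C) :
    ‖φ 1 - φ 0 - ψ 0‖ ≤ C := by
  have hC : 0 ≤ C := (norm_nonneg _).trans (hχ 0 (by simp))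
  have hψC : ∀ t ∈ Icc (0 : ℝ) 1, ‖ψ t - ψ 0‖ ≤ C := fun t ht => by
    have := norm_image_sub_le_of_norm_deriv_le_segment' hψ
      (fun u hu => hχ u (Ico_subset_Icc_self hu)) t ht
    nlinarith [ht.2]
  have hη : ∀ t ∈ Icc (0 : ℝ) 1,
      HasDerivWithinAt (fun u => φ u - u • ψ 0) (ψ t - ψ 0) (Icc 0 1) t := fun t ht => by
    have := (hφ t ht).sub ((hasDerivWithinAt_id t _).smul_const (ψ 0))
    rwa [one_smul] at this
  have := norm_image_sub_le_of_norm_deriv_le_segment' hη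
    (fun t ht => hψC t (Ico_subset_Icc_self ht)) 1 (by simp)
  simpa [sub_right_comm] using this

theorem norm_fderivWithin_apply_le_of_segment {g : E → G} {s : Set E} {x d : E} {A B : ℝ}
    (hg : DifferentiableOn ℝ g s) (hg' : DifferentiableOn ℝ (fderivWithin ℝ g s) s)
    (hseg : ∀ t ∈ Icc (0 : ℝ) 1, x + t • d ∈ s)
    (hA : ∀ t ∈ Icc (0 : ℝ) 1, ‖g (x + t • d)‖ ≤ A)
    (hB : ∀ t ∈ Icc (0 : ℝ) 1, ‖fderivWithin ℝ (fderivWithin ℝ g s) s (x + t • d)‖ ≤ B) :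
    ‖fderivWithin ℝ g s x d‖ ≤ 2 * A + B * ‖d‖ ^ 2 := by
  have hline (t : ℝ) : HasDerivWithinAt (fun u : ℝ => x + u • d) d (Icc 0 1) t := by
    simpa using ((hasDerivWithinAt_id t _).smul_const d).const_add x
  have hφ : ∀ t ∈ Icc (0 : ℝ) 1, HasDerivWithinAt (fun u => g (x + u • d))
      (fderivWithin ℝ g s (x + t • d) d) (Icc 0 1) t := fun t ht =>
    (hg _ (hseg t ht)).hasFDerivWithinAt.comp_hasDerivWithinAt t (hline t) hseg
  have hψ : ∀ t ∈ Icc (0 : ℝ) 1, HasDerivWithinAt (fun u => fderivWithin ℝ g s (x + u • d) d)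
      (fderivWithin ℝ (fderivWithin ℝ g s) s (x + t • d) d d) (Icc 0 1) t := fun t ht =>
    (ContinuousLinearMap.apply ℝ G d).hasFDerivAt.comp_hasDerivWithinAt t
      ((hg' _ (hseg t ht)).hasFDerivWithinAt.comp_hasDerivWithinAt t (hline t) hseg)
  have hχ : ∀ t ∈ Icc (0 : ℝ) 1,
      ‖fderivWithin ℝ (fderivWithin ℝ g s) s (x + t • d) d d‖ ≤ B * ‖d‖ ^ 2 := fun t ht => by
    calc _ ≤ ‖fderivWithin ℝ (fderivWithin ℝ g s) s (x + t • d)‖ * ‖d‖ * ‖d‖ :=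
          ContinuousLinearMap.le_opNorm₂ _ _ _
      _ ≤ B * ‖d‖ ^ 2 := by rw [mul_assoc, ← sq]; gcongr; exact hB t ht
  have htaylor := norm_sub_sub_le_of_norm_deriv2_le hφ hψ hχ
  simp only [zero_smul, add_zero, one_smul] at htaylor
  have h₁ := norm_sub_le (g (x + d) - g x) (g (x + d) - g x - fderivWithin ℝ g s x d)
  have h₂ := norm_sub_le (g (x + d)) (g x)
  rw [sub_sub_cancel] at h₁
  have hA₀ := hA 0 (by simp)
  have hA₁ := hA 1 (by simp)
  simp only [zero_smul, add_zero, one_smul] at hA₀ hA₁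
  linarith

theorem exists_eq_smul_sub_smul_of_norm_eq_one {x v : E} {h : ℝ} (hh : 0 < h) (hhx : h ≤ ‖x‖)
    (hv : ‖v‖ = 1) :
    ∃ u w : E, (‖x + u‖ ≤ ‖x‖ ∧ ‖u‖ ≤ h) ∧ (‖x + w‖ ≤ ‖x‖ ∧ ‖w‖ ≤ h) ∧
      v = (2 / h) • w - (1 / h) • u := by
  have hx : 0 < ‖x‖ := hh.trans_le hhx
  -- `u` is the radial step of length `h` towards the origin, `w` the midpoint of `h • v` and `u`.
  set u : E := -(h / ‖x‖) • x
  have hxu : ‖x + u‖ = ‖x‖ - h := by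
    have : x + u = (1 - h / ‖x‖) • x := by simp only [u, sub_smul, one_smul, neg_smul]; abel
    rw [this, norm_smul, Real.norm_of_nonneg (by rw [sub_nonneg, div_le_one hx]; exact hhx)]
    field_simp
  have hu : ‖u‖ = h := by
    simp only [u, norm_smul, norm_neg, Real.norm_of_nonneg (by positivity : 0 ≤ h / ‖x‖)]
    field_simp
  set w : E := (h / 2) • v + (1 / 2 : ℝ) • u
  have hxw : ‖x + w‖ ≤ ‖x‖ := by
    have : x + w = (1 / 2 : ℝ) • (x + u) + ((1 / 2 : ℝ) • x + (h / 2) • v) := by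
      simp only [w, smul_add]; module
    rw [this]
    calc _ ≤ ‖(1 / 2 : ℝ) • (x + u)‖ + (‖(1 / 2 : ℝ) • x‖ + ‖(h / 2) • v‖) :=
          (norm_add_le _ _).trans (by gcongr; exact norm_add_le _ _)
      _ = ‖x‖ := by
        rw [norm_smul, norm_smul, norm_smul, hxu, hv, Real.norm_of_nonneg (by positivity),
          Real.norm_of_nonneg (by positivity)]
        ring
  have hw : ‖w‖ ≤ h := by
    refine (norm_add_le _ _).trans ?_
    rw [norm_smul, norm_smul, hv, hu, Real.norm_of_nonneg (by positivity),
      Real.norm_of_nonneg (by positivity)]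
    linarith
  refine ⟨u, w, ⟨by rw [hxu]; linarith, hu.le⟩, ⟨hxw, hw⟩, ?_⟩
  simp only [w, smul_add, smul_smul]
  field_simp
  module

theorem ContinuousLinearMap.opNorm_le_of_norm_add_le_norm {L : E →L[ℝ] G} {x : E} {h K : ℝ}
    (hh : 0 < h) (hhx : h ≤ ‖x‖) (hK : ∀ d, ‖x + d‖ ≤ ‖x‖ → ‖d‖ ≤ h → ‖L d‖ ≤ K) :
    ‖L‖ ≤ 3 * K / h := by
  have hK₀ : 0 ≤ K := by simpa using hK 0 (by simp) (by simpa using hh.le)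
  refine L.opNorm_le_of_unit_norm (by positivity) fun v hv => ?_
  obtain ⟨u, w, ⟨hxu, hu⟩, ⟨hxw, hw⟩, rfl⟩ := exists_eq_smul_sub_smul_of_norm_eq_one hh hhx hv
  calc ‖L ((2 / h) • w - (1 / h) • u)‖ ≤ 2 / h * ‖L w‖ + 1 / h * ‖L u‖ := by
        rw [map_sub, map_smul, map_smul]
        refine (norm_sub_le _ _).trans_eq ?_
        rw [norm_smul, norm_smul, Real.norm_of_nonneg (by positivity),
          Real.norm_of_nonneg (by positivity)]
    _ ≤ 2 / h * K + 1 / h * K := by gcongr; exacts [hK w hxw hw, hK u hxu hu]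
    _ = 3 * K / h := by ring

theorem norm_le_mul_norm_of_map_zero {g : E → G} {s : Set E} {x : E} {Q : ℝ}
    (hg : DifferentiableOn ℝ g s) (hball : closedBall 0 ‖x‖ ⊆ s) (hg0 : g 0 = 0)
    (hQ : ∀ y ∈ closedBall 0 ‖x‖, ‖fderivWithin ℝ g s y‖ ≤ Q) : ‖g x‖ ≤ Q * ‖x‖ := by
  have hx : x ∈ closedBall (0 : E) ‖x‖ := by simp
  simpa [hg0] using (convex_closedBall (0 : E) ‖x‖).norm_image_sub_le_of_norm_hasFDerivWithin_le
    (fun y hy => (hg y (hball hy)).hasFDerivWithinAt.mono hball) hQ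
    (by simp : (0 : E) ∈ closedBall 0 ‖x‖) hx

theorem norm_fderivWithin_le_nine_mul_sqrt {g : E → G} {s : Set E} {x : E} {A B : ℝ}
    (hball : closedBall 0 ‖x‖ ⊆ s) (hg : DifferentiableOn ℝ g s)
    (hg' : DifferentiableOn ℝ (fderivWithin ℝ g s) s) (hg'0 : fderivWithin ℝ g s 0 = 0)
    (hA : ∀ y ∈ closedBall 0 ‖x‖, ‖g y‖ ≤ A)
    (hB : ∀ y ∈ closedBall 0 ‖x‖, ‖fderivWithin ℝ (fderivWithin ℝ g s) s y‖ ≤ B) :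
    ‖fderivWithin ℝ g s x‖ ≤ 9 * √(A * B) := by
  have hx : x ∈ closedBall (0 : E) ‖x‖ := by simp
  have hB₀ : 0 ≤ B := (norm_nonneg (fderivWithin ℝ (fderivWithin ℝ g s) s x)).trans (hB x hx)
  refine le_nine_mul_sqrt_of_forall_le (norm_nonneg _) hB₀
    (norm_le_mul_norm_of_map_zero hg' hball hg'0 hB) fun h hh hhx => ?_
  refine ContinuousLinearMap.opNorm_le_of_norm_add_le_norm hh hhx fun d hd hdh => ?_
  have hseg : ∀ t ∈ Icc (0 : ℝ) 1, x + t • d ∈ closedBall 0 ‖x‖ := fun t ht =>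
    (convex_closedBall 0 ‖x‖).add_smul_mem hx (by simpa using hd) ht
  calc ‖fderivWithin ℝ g s x d‖ ≤ 2 * A + B * ‖d‖ ^ 2 :=
        norm_fderivWithin_apply_le_of_segment hg hg' (fun t ht => hball (hseg t ht))
          (fun t ht => hA _ (hseg t ht)) (fun t ht => hB _ (hseg t ht))
    _ ≤ 2 * A + B * h ^ 2 := by gcongr

end NormedSpace

section Flat

variable {E F : Type*} [NormedAddCommGroup E] [NormedSpace ℝ E]
  [NormedAddCommGroup F] [NormedSpace ℝ F] {f : E → F} {r : ℝ}

theorem uniqueDiffOn_closedBall (x : E) (hr : 0 < r) : UniqueDiffOn ℝ (closedBall x r) :=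
  uniqueDiffOn_convex (convex_closedBall x r) (by simp [interior_closedBall _ hr.ne', hr])

theorem LinearIsometryEquiv.norm_fderivWithin_comp {G H : Type*} [NormedAddCommGroup G]
    [NormedSpace ℝ G] [NormedAddCommGroup H] [NormedSpace ℝ H] (iso : G ≃ₗᵢ[ℝ] H) {g : E → G}
    {s : Set E} {y : E} (hy : UniqueDiffWithinAt ℝ s y) :
    ‖fderivWithin ℝ (iso ∘ g) s y‖ = ‖fderivWithin ℝ g s y‖ := by
  rw [iso.comp_fderivWithin hy]
  exact ContinuousLinearMap.opNorm_ext _ _ fun v => iso.norm_map _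

theorem norm_iteratedFDerivWithin_succ_le_nine_mul_sqrt (hr : 0 < r)
    (hf : ContDiffOn ℝ (⊤ : ℕ∞) f (closedBall 0 r)) {j k : ℕ} {a c : ℝ} (ha₀ : 0 ≤ a)
    (hc₀ : 0 ≤ c) (hflat : iteratedFDerivWithin ℝ (j + 1) f (closedBall 0 r) 0 = 0)
    (ha : ∀ y ∈ closedBall (0 : E) r, ‖iteratedFDerivWithin ℝ j f (closedBall 0 r) y‖ ≤ ‖y‖ ^ k * a)
    (hc : ∀ y ∈ closedBall (0 : E) r,
      ‖iteratedFDerivWithin ℝ (j + 2) f (closedBall 0 r) y‖ ≤ ‖y‖ ^ k * c)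
    {x : E} (hx : x ∈ closedBall 0 r) :
    ‖iteratedFDerivWithin ℝ (j + 1) f (closedBall 0 r) x‖ ≤ ‖x‖ ^ k * (9 * √(a * c)) := by
  set s := closedBall (0 : E) r
  have hs : UniqueDiffOn ℝ s := uniqueDiffOn_closedBall 0 hr
  have hball : closedBall 0 ‖x‖ ⊆ s :=
    closedBall_subset_closedBall (mem_closedBall_zero_iff.1 hx)
  have h2 : ContDiffOn ℝ 2 (iteratedFDerivWithin ℝ j f s) s := fun y hy =>
    (hf y hy).iteratedFDerivWithin_right hs (WithTop.coe_le_coe.2 le_top) hy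
  have hflat' : fderivWithin ℝ (iteratedFDerivWithin ℝ j f s) s 0 = 0 := by
    have : ‖fderivWithin ℝ (iteratedFDerivWithin ℝ j f s) s 0‖ = 0 := by
      rw [norm_fderivWithin_iteratedFDerivWithin, hflat, norm_zero]
    exact (ContinuousLinearMap.opNorm_zero_iff _).1 this
  rw [← norm_fderivWithin_iteratedFDerivWithin]
  calc _ ≤ 9 * √(‖x‖ ^ k * a * (‖x‖ ^ k * c)) := by
        refine norm_fderivWithin_le_nine_mul_sqrt hball (h2.differentiableOn two_ne_zero)
          ((h2.fderivWithin hs (m := 1) (by norm_num)).differentiableOn one_ne_zero) hflat'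
          (fun y hy => (ha y (hball hy)).trans (by gcongr; exact mem_closedBall_zero_iff.1 hy))
          (fun y hy => ?_)
        rw [fderivWithin_iteratedFDerivWithin,
          LinearIsometryEquiv.norm_fderivWithin_comp _ (hs y (hball hy)),
          norm_fderivWithin_iteratedFDerivWithin]
        exact (hc y (hball hy)).trans (by gcongr; exact mem_closedBall_zero_iff.1 hy)
    _ = ‖x‖ ^ k * (9 * √(a * c)) := by
        rw [show ‖x‖ ^ k * a * (‖x‖ ^ k * c) = (‖x‖ ^ k) ^ 2 * (a * c) by ring,
          Real.sqrt_mul (by positivity), Real.sqrt_sq (by positivity)]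
        ring

theorem norm_iteratedFDerivWithin_le_pow_mul (hr : 0 < r)
    (hf : ContDiffOn ℝ (⊤ : ℕ∞) f (closedBall 0 r))
    (hflat : ∀ i, iteratedFDerivWithin ℝ i f (closedBall 0 r) 0 = 0) {S : ℝ} (k : ℕ) {j : ℕ}
    (hS : ∀ y ∈ closedBall (0 : E) r, ‖iteratedFDerivWithin ℝ (j + k) f (closedBall 0 r) y‖ ≤ S)
    {x : E} (hx : x ∈ closedBall 0 r) :
    ‖iteratedFDerivWithin ℝ j f (closedBall 0 r) x‖ ≤ ‖x‖ ^ k * S := by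
  induction k generalizing j x with
  | zero => simpa using hS x hx
  | succ k ih =>
    have hball : closedBall 0 ‖x‖ ⊆ closedBall (0 : E) r :=
      closedBall_subset_closedBall (mem_closedBall_zero_iff.1 hx)
    have hS₀ : 0 ≤ S := (norm_nonneg _).trans (hS 0 (by simp [hr.le]))
    have hmv := norm_le_mul_norm_of_map_zero
      (hf.differentiableOn_iteratedFDerivWithin (by exact_mod_cast WithTop.coe_lt_top _)
        (uniqueDiffOn_closedBall 0 hr)) hball (hflat j) (Q := ‖x‖ ^ k * S) fun y hy => by
      rw [norm_fderivWithin_iteratedFDerivWithin]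
      calc _ ≤ ‖y‖ ^ k * S := ih (by rwa [Nat.add_right_comm]) (hball hy)
        _ ≤ ‖x‖ ^ k * S := by gcongr; exact mem_closedBall_zero_iff.1 hy
    calc _ ≤ ‖x‖ ^ k * S * ‖x‖ := hmv
      _ = ‖x‖ ^ (k + 1) * S := by ring

theorem exists_forall_norm_iteratedFDerivWithin_le_pow_mul [ProperSpace E] (hr : 0 < r)
    (hf : ContDiffOn ℝ (⊤ : ℕ∞) f (closedBall 0 r))
    (hflat : ∀ i, iteratedFDerivWithin ℝ i f (closedBall 0 r) 0 = 0) (N k : ℕ) :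
    ∃ S, ∀ i ≤ N, ∀ y ∈ closedBall (0 : E) r,
      ‖iteratedFDerivWithin ℝ i f (closedBall 0 r) y‖ ≤ ‖y‖ ^ k * S := by
  have hbound (i : Fin (N + 1)) : ∃ S, ∀ y ∈ closedBall (0 : E) r,
      ‖iteratedFDerivWithin ℝ (i + k) f (closedBall 0 r) y‖ ≤ S :=
    (isCompact_closedBall 0 r).exists_bound_of_continuousOn
      (hf.continuousOn_iteratedFDerivWithin (by exact_mod_cast (WithTop.coe_lt_top _).le)
        (uniqueDiffOn_closedBall 0 hr))
  choose S hS using hbound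
  obtain ⟨M, hM⟩ := Finite.exists_le S
  exact ⟨M, fun i hi y hy => norm_iteratedFDerivWithin_le_pow_mul hr hf hflat k
    (fun z hz => (hS ⟨i, by omega⟩ z hz).trans (hM _)) hy⟩

end Flat

section FlatNorm

variable {m : ℕ} {r : ℝ} {k : ℕ} {f : EuclideanSpace ℝ (Fin m) → ℝ}

theorem flatNorm_nonneg (N : ℕ) : 0 ≤ flatNorm m r N k f :=
  Real.iSup_nonneg fun _ => by positivity

theorem flatNorm_le {N : ℕ} {A : ℝ} (hA : 0 ≤ A)
    (h : ∀ i ≤ N, ∀ y ∈ closedBall (0 : EuclideanSpace ℝ (Fin m)) r,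
      ‖iteratedFDerivWithin ℝ i f (closedBall 0 r) y‖ ≤ ‖y‖ ^ k * A) :
    flatNorm m r N k f ≤ A :=
  Real.iSup_le (fun ⟨⟨y, hy, hy0⟩, i⟩ => (zpow_neg_natCast_mul_le_iff (norm_pos_iff.2 hy0) k).2
    (h i (Nat.lt_succ_iff.1 i.2) y hy)) hA

theorem norm_iteratedFDerivWithin_le_pow_mul_flatNorm (hr : 0 < r)
    (hf : ContDiffOn ℝ (⊤ : ℕ∞) f (closedBall 0 r))
    (hflat : ∀ i, iteratedFDerivWithin ℝ i f (closedBall 0 r) 0 = 0) {N i : ℕ} (hi : i ≤ N)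
    {y : EuclideanSpace ℝ (Fin m)} (hy : y ∈ closedBall 0 r) :
    ‖iteratedFDerivWithin ℝ i f (closedBall 0 r) y‖ ≤ ‖y‖ ^ k * flatNorm m r N k f := by
  rcases eq_or_ne y 0 with rfl | hy0
  · rw [hflat, norm_zero]
    exact mul_nonneg (by positivity) (flatNorm_nonneg N)
  obtain ⟨S, hS⟩ := exists_forall_norm_iteratedFDerivWithin_le_pow_mul hr hf hflat N k
  have hbdd : BddAbove (range fun p : (closedBall (0 : EuclideanSpace ℝ (Fin m)) r \ {0} :
      Set (EuclideanSpace ℝ (Fin m))) × Fin (N + 1) =>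
        ‖(p.1 : EuclideanSpace ℝ (Fin m))‖ ^ (-(k : ℤ)) *
          ‖iteratedFDerivWithin ℝ p.2 f (closedBall 0 r) p.1‖) := by
    refine ⟨S, ?_⟩
    rintro _ ⟨⟨⟨z, hz, hz0⟩, j⟩, rfl⟩
    exact (zpow_neg_natCast_mul_le_iff (norm_pos_iff.2 hz0) k).2
      (hS j (Nat.lt_succ_iff.1 j.2) z hz)
  exact (zpow_neg_natCast_mul_le_iff (norm_pos_iff.2 hy0) k).1
    (le_ciSup hbdd ⟨⟨y, hy, hy0⟩, ⟨i, by omega⟩⟩)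

theorem flatNorm_succ_le (hr : 0 < r) (hf : ContDiffOn ℝ (⊤ : ℕ∞) f (closedBall 0 r))
    (hflat : ∀ i, iteratedFDerivWithin ℝ i f (closedBall 0 r) 0 = 0) (j : ℕ) :
    flatNorm m r (j + 1) k f ≤ 9 * √(flatNorm m r j k f * flatNorm m r (j + 2) k f) := by
  set a := flatNorm m r j k f
  set c := flatNorm m r (j + 2) k f
  have ha : 0 ≤ a := flatNorm_nonneg j
  have hc : 0 ≤ c := flatNorm_nonneg (j + 2)
  have hbound {i N : ℕ} (hi : i ≤ N) (y) (hy : y ∈ closedBall 0 r) :=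
    norm_iteratedFDerivWithin_le_pow_mul_flatNorm (k := k) hr hf hflat hi hy
  have hac : a ≤ c := flatNorm_le hc fun i hi => hbound (by omega)
  have ha9 : a ≤ 9 * √(a * c) :=
    calc a = √(a * a) := (Real.sqrt_mul_self ha).symm
      _ ≤ √(a * c) := by gcongr
      _ ≤ 9 * √(a * c) := le_mul_of_one_le_left (Real.sqrt_nonneg _) (by norm_num)
  refine flatNorm_le (by positivity) fun i hi y hy => ?_
  rcases hi.lt_or_eq with hi | rfl
  · exact (hbound (by omega : i ≤ j) y hy).trans (by gcongr)
  · exact norm_iteratedFDerivWithin_succ_le_nine_mul_sqrt hr hf ha hc (hflat _)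
      (hbound le_rfl) (hbound le_rfl) hy

end FlatNorm

theorem interpolation_derivatives_general (m : ℕ) (r : ℝ) (hr : 0 < r)
    (n k l₁ l₂ : ℕ) (hl₁ : l₁ ≤ n) (hl : 0 < l₁ + l₂) :
    ∃ C > (0 : ℝ), ∀ f : EuclideanSpace ℝ (Fin m) → ℝ,
      ContDiffOn ℝ (⊤ : ℕ∞) f (closedBall 0 r) →
      (∀ i : ℕ, iteratedFDerivWithin ℝ i f (closedBall 0 r) 0 = 0) →
      flatNorm m r n k f ≤
        C * flatNorm m r (n - l₁) k f ^ ((l₂ : ℝ) / ((l₁ : ℝ) + (l₂ : ℝ))) *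
          flatNorm m r (n + l₂) k f ^ ((l₁ : ℝ) / ((l₁ : ℝ) + (l₂ : ℝ))) := by
  refine ⟨9 ^ (l₁ * l₂), by positivity, fun f hf hflat => ?_⟩
  have key := le_pow_mul_rpow_mul_rpow_of_le_mul_sqrt
    (a := fun j => flatNorm m r (n - l₁ + j) k f) (by norm_num) (fun _ => flatNorm_nonneg _)
    (fun j _ => flatNorm_succ_le hr hf hflat (n - l₁ + j)) hl
  simp only [add_zero] at key
  rwa [Nat.sub_add_cancel hl₁, show n - l₁ + (l₁ + l₂) = n + l₂ by omega] at key

/-- interpolation inequality in the derivative index: for `l₁ ≤ n`,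
`l₁ + l₂ > 0`, there is `C > 0` with
`⟨f⟩_{n,k,r} ≤ C ⟨f⟩_{n−l₁,k,r}^{l₂/(l₁+l₂)} ⟨f⟩_{n+l₂,k,r}^{l₁/(l₁+l₂)}`
for every smooth `f` on `B̄_r` flat at the origin. -/
theorem interpolation_derivatives (m : ℕ) (hm : 1 ≤ m) (r : ℝ) (hr : 0 < r)
    (n k l₁ l₂ : ℕ) (hl₁ : l₁ ≤ n) (hl : 0 < l₁ + l₂) :
    ∃ C > (0 : ℝ), ∀ f : EuclideanSpace ℝ (Fin m) → ℝ,
      ContDiffOn ℝ (⊤ : ℕ∞) f (closedBall 0 r) →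
      (∀ i : ℕ, iteratedFDerivWithin ℝ i f (closedBall 0 r) 0 = 0) →
      flatNorm m r n k f ≤
        C * flatNorm m r (n - l₁) k f ^ ((l₂ : ℝ) / ((l₁ : ℝ) + (l₂ : ℝ))) *
          flatNorm m r (n + l₂) k f ^ ((l₁ : ℝ) / ((l₁ : ℝ) + (l₂ : ℝ))) :=
  interpolation_derivatives_general m r hr n k l₁ l₂ hl₁ hl
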